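/- arXiv:2303.11230 — 2 statements merged into one kernel-verified Lean document; each statement's English description precedes it below -/
import Mathlib

section
/- Let M be a (p+q)×(p+q) matrix (over the reals) partitioned into blocks M11 (p×p), M12 (p×q), M21 (q×p), M22 (q×q). If rank(M11) = rank(M), then M22 = M21 · M11⁺ · M12, where M11⁺ denotes the Moore–Penrose pseudoinverse of M11. -/
open Matrix

noncomputable def specNorm {m n : Type*} [Fintype m] [Fintype n] [DecidableEq n]
    (M : Matrix m n ℝ) : ℝ :=
  ‖(Matrix.toEuclideanLin M).toContinuousLinearMap‖

noncomputable def frobNorm {m n : Type*} [Fintype m] [Fintype n] (M : Matrix m n ℝ) : ℝ :=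
  Real.sqrt (∑ i, ∑ j, (M i j)^2)

def IsMoorePenrose {m n : Type*} [Fintype m] [Fintype n]
    (A : Matrix m n ℝ) (B : Matrix n m ℝ) : Prop :=
  A * B * A = A ∧ B * A * B = B ∧ (A * B)ᵀ = A * B ∧ (B * A)ᵀ = B * A

/-- Key lemma: if rank(A) = rank of the block matrix, then the right column blocks
are obtained from the left ones by a common right factor. -/
lemma owen_perry_key {p q : ℕ} (A : Matrix (Fin p) (Fin p) ℝ) (B : Matrix (Fin p) (Fin q) ℝ)
    (C : Matrix (Fin q) (Fin p) ℝ) (D : Matrix (Fin q) (Fin q) ℝ)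
    (h : A.rank = (Matrix.fromBlocks A B C D).rank) :
    ∃ X : Matrix (Fin p) (Fin q) ℝ, B = A * X ∧ D = C * X := by
  set N : Matrix (Fin p ⊕ Fin q) (Fin p ⊕ Fin q) ℝ := Matrix.fromBlocks A B C D with hN
  set S : Matrix (Fin p ⊕ Fin q) (Fin p) ℝ := N.submatrix id Sum.inl with hS
  have hSN : ∀ x, S.mulVec x = N.mulVec (Sum.elim x 0) := by
    intro x; ext i
    simp [hS, Matrix.mulVec, dotProduct, Fintype.sum_sum_type]
  have hle : LinearMap.range S.mulVecLin ≤ LinearMap.range N.mulVecLin := by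
    rintro _ ⟨x, rfl⟩
    exact ⟨Sum.elim x 0, by simp [Matrix.mulVecLin_apply, hSN]⟩
  have hπ : A.mulVecLin = (LinearMap.funLeft ℝ ℝ Sum.inl).comp S.mulVecLin := by
    apply LinearMap.ext; intro x
    ext i
    simp [Matrix.mulVecLin_apply, LinearMap.funLeft_apply, hS, hN, Matrix.mulVec, dotProduct]
  have hrAS : A.rank ≤ S.rank := by
    rw [Matrix.rank, Matrix.rank, hπ, LinearMap.range_comp]
    exact Submodule.finrank_map_le _ _
  have heq : LinearMap.range S.mulVecLin = LinearMap.range N.mulVecLin := by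
    apply Submodule.eq_of_le_of_finrank_le hle
    calc Module.finrank ℝ (LinearMap.range N.mulVecLin) = N.rank := rfl
      _ = A.rank := h.symm
      _ ≤ S.rank := hrAS
      _ = Module.finrank ℝ (LinearMap.range S.mulVecLin) := rfl
  have hcol : ∀ j : Fin q, ∃ x : Fin p → ℝ, S.mulVec x = fun i => N i (Sum.inr j) := by
    intro j
    have hm : (fun i => N i (Sum.inr j)) ∈ LinearMap.range N.mulVecLin := by
      refine ⟨Pi.single (Sum.inr j) 1, ?_⟩
      ext i
      simp [Matrix.mulVecLin_apply, Matrix.mulVec, dotProduct, Pi.single_apply]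
    rw [← heq] at hm
    exact hm
  choose x hx using hcol
  refine ⟨Matrix.of fun k j => x j k, ?_, ?_⟩
  · ext i j
    have h1 := congrFun (hx j) (Sum.inl i)
    simp [hS, hN, Matrix.mulVec, dotProduct] at h1
    simp [Matrix.mul_apply, ← h1]
  · ext i j
    have h1 := congrFun (hx j) (Sum.inr i)
    simp [hS, hN, Matrix.mulVec, dotProduct] at h1
    simp [Matrix.mul_apply, ← h1]

/-- Owen–Perry self-consistency: if rank(M11) = rank(M) for the block matrix
M = [[M11, M12], [M21, M22]], then M22 = M21 · M11⁺ · M12. -/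
theorem stmt0 {p q : ℕ}
    (M11 : Matrix (Fin p) (Fin p) ℝ) (M12 : Matrix (Fin p) (Fin q) ℝ)
    (M21 : Matrix (Fin q) (Fin p) ℝ) (M22 : Matrix (Fin q) (Fin q) ℝ)
    (hrank : M11.rank = (Matrix.fromBlocks M11 M12 M21 M22).rank)
    (B : Matrix (Fin p) (Fin p) ℝ) (hB : IsMoorePenrose M11 B) :
    M22 = M21 * B * M12 := by
  obtain ⟨X, hX1, hX2⟩ := owen_perry_key M11 M12 M21 M22 hrank
  have hrankT : M11ᵀ.rank = (Matrix.fromBlocks M11ᵀ M21ᵀ M12ᵀ M22ᵀ).rank := by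
    rw [← Matrix.fromBlocks_transpose, Matrix.rank_transpose, Matrix.rank_transpose]
    exact hrank
  obtain ⟨Y, hY1, hY2⟩ := owen_perry_key M11ᵀ M21ᵀ M12ᵀ M22ᵀ hrankT
  have hM21 : M21 = Yᵀ * M11 := by
    have := congrArg Matrix.transpose hY1
    simpa [Matrix.transpose_mul] using this
  calc M22 = M21 * X := hX2
    _ = Yᵀ * M11 * X := by rw [hM21]
    _ = Yᵀ * (M11 * B * M11) * X := by rw [hB.1]
    _ = (Yᵀ * M11) * B * (M11 * X) := by simp only [Matrix.mul_assoc]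
    _ = M21 * B * M12 := by rw [← hM21, ← hX1]
end

section
/- Let P ∈ ℝ^{N×N} be symmetric with rank(P) = K and block partition [[P11, P12],[P21, P22]] with P11 ∈ ℝ^{n×n}. If rank(P11) = K, then P22 is uniquely determined by P11 and P12: P22 = P12ᵀ P11⁺ P12, where P11⁺ is the Moore–Penrose inverse of P11. Moreover rank(P22) ≤ K. -/
open Matrix

/-- Symmetric-case Owen–Perry: if P is symmetric of rank K with rank(P11) = K, then
P22 = P12ᵀ P11⁺ P12 and rank(P22) ≤ K. -/
theorem stmt14 {n m K : ℕ}
    (P11 : Matrix (Fin n) (Fin n) ℝ) (P12 : Matrix (Fin n) (Fin m) ℝ)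
    (P22 : Matrix (Fin m) (Fin m) ℝ)
    (hsymm : (Matrix.fromBlocks P11 P12 P12ᵀ P22)ᵀ = Matrix.fromBlocks P11 P12 P12ᵀ P22)
    (hrank : (Matrix.fromBlocks P11 P12 P12ᵀ P22).rank = K)
    (h11 : P11.rank = K)
    (B : Matrix (Fin n) (Fin n) ℝ) (hB : IsMoorePenrose P11 B) :
    P22 = P12ᵀ * B * P12 ∧ P22.rank ≤ K := by
  set Pf : Matrix (Fin n ⊕ Fin m) (Fin n ⊕ Fin m) ℝ := Matrix.fromBlocks P11 P12 P12ᵀ P22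
    with hPf
  have hP11symm : P11ᵀ = P11 := by
    ext i j
    simpa [hPf, Matrix.fromBlocks] using congrFun (congrFun hsymm (Sum.inl i)) (Sum.inl j)
  -- the left column block of Pf
  set L : Matrix (Fin n ⊕ Fin m) (Fin n) ℝ := Matrix.of fun i j => Pf i (Sum.inl j) with hL
  have hLmul : ∀ y : Fin n → ℝ, L *ᵥ y = Pf *ᵥ (Sum.elim y 0) := by
    intro y
    ext i
    simp [hL, Matrix.mulVec, dotProduct, Fintype.sum_sum_type]
  have hle : LinearMap.range L.mulVecLin ≤ LinearMap.range Pf.mulVecLin := by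
    rintro x ⟨y, rfl⟩
    exact ⟨Sum.elim y 0, by simp [Matrix.mulVecLin_apply, (hLmul y).symm]⟩
  -- P11 is the composition of L with the projection onto inl coordinates
  have hcomp : P11.mulVecLin =
      (LinearMap.funLeft ℝ ℝ (Sum.inl : Fin n → Fin n ⊕ Fin m)).comp L.mulVecLin := by
    ext y i
    simp [hL, hPf, Matrix.mulVecLin_apply, Matrix.mulVec, dotProduct,
      LinearMap.funLeft, Matrix.fromBlocks, Pi.single_apply, mul_ite,
      Finset.sum_ite_eq', Finset.sum_ite_eq]
  have hK1 : K ≤ L.rank := by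
    rw [← h11]
    unfold Matrix.rank
    rw [hcomp, LinearMap.range_comp]
    exact Submodule.finrank_map_le _ _
  have hK2 : L.rank ≤ K := by
    rw [← hrank]
    exact Submodule.finrank_mono hle
  have hrange : LinearMap.range L.mulVecLin = LinearMap.range Pf.mulVecLin := by
    apply Submodule.eq_of_le_of_finrank_le hle
    have : Pf.rank ≤ L.rank := by rw [hrank]; exact hK1
    exact this
  have hcol : ∀ j : Fin m, ∃ y : Fin n → ℝ,
      (P11 *ᵥ y = fun i => P12 i j) ∧ (P12ᵀ *ᵥ y = fun i => P22 i j) := by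
    intro j
    have hmem : Pf *ᵥ (Pi.single (Sum.inr j) 1) ∈ LinearMap.range Pf.mulVecLin :=
      ⟨Pi.single (Sum.inr j) 1, rfl⟩
    rw [← hrange] at hmem
    obtain ⟨y, hy⟩ := hmem
    have hy' : L *ᵥ y = Pf *ᵥ (Pi.single (Sum.inr j) 1) := hy
    refine ⟨y, ?_, ?_⟩
    · ext i
      have h1 := congrFun hy' (Sum.inl i)
      simpa [hL, hPf, Matrix.mulVec, dotProduct, Matrix.fromBlocks,
        Fintype.sum_sum_type, Pi.single_apply, mul_ite] using h1
    · ext i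
      have h1 := congrFun hy' (Sum.inr i)
      simpa [hL, hPf, Matrix.mulVec, dotProduct, Matrix.fromBlocks,
        Fintype.sum_sum_type, Pi.single_apply, mul_ite] using h1
  choose C hC1 hC2 using hcol
  set Cm : Matrix (Fin n) (Fin m) ℝ := Matrix.of fun i j => C j i with hCm
  have hC1' : P11 * Cm = P12 := by
    ext i j
    have := congrFun (hC1 j) i
    simpa [Matrix.mul_apply, Matrix.mulVec, dotProduct, hCm] using this
  have hC2' : P12ᵀ * Cm = P22 := by
    ext i j
    have := congrFun (hC2 j) i
    simpa [Matrix.mul_apply, Matrix.mulVec, dotProduct, hCm] using this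
  have h12T : P12ᵀ = Cmᵀ * P11 := by
    rw [← hC1', Matrix.transpose_mul, hP11symm]
  have hB1 : P11 * B * P11 = P11 := hB.1
  have key : P22 = P12ᵀ * B * P12 := by
    calc P22 = P12ᵀ * Cm := hC2'.symm
    _ = (Cmᵀ * P11) * Cm := by rw [h12T]
    _ = (Cmᵀ * (P11 * B * P11)) * Cm := by rw [hB1]
    _ = (Cmᵀ * P11) * B * (P11 * Cm) := by
        simp only [Matrix.mul_assoc]
    _ = P12ᵀ * B * P12 := by rw [← h12T, hC1', Matrix.mul_assoc]
  refine ⟨key, ?_⟩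
  have h22 : P22 = (Cmᵀ * P11) * Cm := by rw [← h12T, hC2']
  calc P22.rank = ((Cmᵀ * P11) * Cm).rank := by rw [h22]
  _ ≤ (Cmᵀ * P11).rank := Matrix.rank_mul_le_left _ _
  _ ≤ P11.rank := Matrix.rank_mul_le_right _ _
  _ = K := h11
end
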